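/- Let k > 0 and β > −β̄(k). Then there exists ν > 0 such that for every u ∈ C²([0,1]) with u(0) = u(1) = 0, one has ∫₀¹ u''(x)² dx + β·∫₀¹ u'(x)² dx + k·∫₀¹ u(x)² dx ≥ ν·∫₀¹ u''(x)² dx. -/

import Mathlib

/-!
Write `P = ∫ u'²`, `Q = ∫ u''²` and `R = ∫ u²`. Two facts about `u` suffice: Wirtinger's
inequality `π² R ≤ P`, from the derivative `u'² - π² u² - (u' - u π cot (π x))²` of
`u² π cot (π x)`, and `P = -∫ u u'' ≤ t Q + R / (4t)` for every `t > 0`.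
For `β ≥ 0` take `ν = 1`. For `β < 0` and `β² < 4k`, the choice `t = -β / (4k)` gives
`ν = 1 - β² / (4k)`. Otherwise `k ≤ π⁴` and `2k/π² ≤ -β < π² + k/π²`; split
`-β P = (2k/π²) P + (-β - 2k/π²) P`, bound the first part with `t = 1/(2π²)` and the second with
`P ≤ Q/π²` (a consequence of the two facts), to get `ν = 1 + β/π² + k/π⁴ > 0`.
-/

open Real Set

noncomputable def betaBar (k : ℝ) : ℝ :=
  if k ≤ π^4 then π^2 + k/π^2 else 2 * Real.sqrt k

open Filter Topology intervalIntegral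

theorem Real.cot_sub_int_mul_pi (x : ℝ) (n : ℤ) : cot (x - n * π) = cot x := by
  have h : ((-1 : ℝ) ^ n) ≠ 0 := zpow_ne_zero _ (by norm_num)
  rw [cot_eq_cos_div_sin, cot_eq_cos_div_sin, sin_sub_int_mul_pi, cos_sub_int_mul_pi,
    mul_div_mul_left _ _ h]

theorem Real.mul_cot_eq_cos_div_sinc {x : ℝ} (hx : x ≠ 0) : x * cot x = cos x / sinc x := by
  rw [cot_eq_cos_div_sin, sinc_of_ne_zero hx]
  field_simp

theorem tendsto_sub_mul_pi_mul_cot (n : ℤ) :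
    Tendsto (fun x => (x - n) * (π * cot (π * x))) (𝓝[≠] (n : ℝ)) (𝓝 1) := by
  have hcont : ContinuousAt (fun x : ℝ => cos (π * (x - n)) / sinc (π * (x - n))) n := by
    refine ContinuousAt.div (by fun_prop) (by fun_prop) ?_
    simp
  have hval : cos (π * ((n : ℝ) - n)) / sinc (π * ((n : ℝ) - n)) = 1 := by simp
  rw [← hval]
  refine (hcont.tendsto.mono_left nhdsWithin_le_nhds).congr' ?_
  filter_upwards [self_mem_nhdsWithin] with x hx
  have hπx : π * (x - n) ≠ 0 := mul_ne_zero pi_ne_zero (sub_ne_zero.mpr hx)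
  rw [← mul_cot_eq_cos_div_sinc hπx, show π * (x - n) = π * x - n * π by ring,
    cot_sub_int_mul_pi]
  ring

theorem Real.hasDerivAt_cot {x : ℝ} (hx : sin x ≠ 0) : HasDerivAt cot (-1 / sin x ^ 2) x := by
  have hcot : cot = cos / sin := funext cot_eq_cos_div_sin
  have h := (hasDerivAt_cos x).div (hasDerivAt_sin x) hx
  rw [← hcot] at h
  refine h.congr_deriv ?_
  rw [← sin_sq_add_cos_sq x]
  ring

theorem tendsto_sq_mul_of_hasDerivWithinAt {u w : ℝ → ℝ} {s : Set ℝ} {a d c : ℝ}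
    (hu : HasDerivWithinAt u d s a) (ha : u a = 0)
    (hw : Tendsto (fun x => (x - a) * w x) (𝓝[s \ {a}] a) (𝓝 c)) :
    Tendsto (fun x => u x ^ 2 * w x) (𝓝[s \ {a}] a) (𝓝 0) := by
  have hslope : Tendsto (fun x => u x / (x - a)) (𝓝[s \ {a}] a) (𝓝 d) :=
    (hasDerivWithinAt_iff_tendsto_slope.mp hu).congr fun x => by
      simp [slope_fun_def, ha, div_eq_inv_mul]
  have hu0 : Tendsto u (𝓝[s \ {a}] a) (𝓝 0) :=
    ha ▸ hu.continuousWithinAt.tendsto.mono_left (nhdsWithin_mono _ sdiff_subset)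
  have hprod := (hu0.mul hslope).mul hw
  rw [zero_mul, zero_mul] at hprod
  refine hprod.congr' ?_
  filter_upwards [self_mem_nhdsWithin] with x hx
  have hxa : x - a ≠ 0 := sub_ne_zero.mpr hx.2
  field_simp

section Wirtinger

variable {u u' : ℝ → ℝ}

theorem sin_pi_mul_ne_zero_of_mem_Ioo {x : ℝ} (hx : x ∈ Ioo 0 1) : sin (π * x) ≠ 0 :=
  (sin_pos_of_pos_of_lt_pi (mul_pos pi_pos hx.1) (by nlinarith [pi_pos, hx.2])).ne'

theorem hasDerivAt_sq_mul_pi_mul_cot {x : ℝ} (hx : x ∈ Ioo 0 1) (hu : HasDerivAt u (u' x) x) :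
    HasDerivAt (fun y => u y ^ 2 * (π * cot (π * y)))
      (2 * u x * u' x * (π * cot (π * x)) - π ^ 2 * u x ^ 2 / sin (π * x) ^ 2) x := by
  have hcot := ((hasDerivAt_cot (sin_pi_mul_ne_zero_of_mem_Ioo hx)).comp x
    ((hasDerivAt_id x).const_mul π)).const_mul π
  refine ((hu.pow 2).mul hcot).congr_deriv ?_
  simp only [Nat.cast_ofNat, Pi.pow_apply, Function.comp_def]
  ring

theorem deriv_sq_mul_pi_mul_cot_le {x : ℝ} (hx : x ∈ Ioo 0 1) :
    2 * u x * u' x * (π * cot (π * x)) - π ^ 2 * u x ^ 2 / sin (π * x) ^ 2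
      ≤ u' x ^ 2 - π ^ 2 * u x ^ 2 := by
  have hs := sin_pi_mul_ne_zero_of_mem_Ioo hx
  have hsq : u' x ^ 2 - π ^ 2 * u x ^ 2
      - (2 * u x * u' x * (π * cot (π * x)) - π ^ 2 * u x ^ 2 / sin (π * x) ^ 2)
      = (u' x - u x * (π * cot (π * x))) ^ 2 := by
    rw [cot_eq_cos_div_sin]
    field_simp
    linear_combination (-(π ^ 2 * u x ^ 2)) * sin_sq_add_cos_sq (π * x)
  linarith [sq_nonneg (u' x - u x * (π * cot (π * x)))]

theorem continuousWithinAt_sq_mul_pi_mul_cot_of_int (n : ℤ)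
    (hu : HasDerivWithinAt u (u' n) (Icc 0 1) n) (hn : u n = 0) :
    ContinuousWithinAt (fun x => u x ^ 2 * (π * cot (π * x))) (Icc 0 1) n := by
  rw [← continuousWithinAt_sdiff_self, ContinuousWithinAt, hn, sq, zero_mul, zero_mul]
  exact tendsto_sq_mul_of_hasDerivWithinAt hu hn
    ((tendsto_sub_mul_pi_mul_cot n).mono_left (nhdsWithin_mono _ fun x hx => hx.2))

variable (hu : ∀ x ∈ Icc 0 1, HasDerivWithinAt u (u' x) (Icc 0 1) x) (h0 : u 0 = 0) (h1 : u 1 = 0)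
include hu h0 h1

theorem continuousOn_sq_mul_pi_mul_cot :
    ContinuousOn (fun x => u x ^ 2 * (π * cot (π * x))) (Icc 0 1) := by
  intro x hx
  rcases eq_endpoints_or_mem_Ioo_of_mem_Icc hx with rfl | rfl | hx'
  · exact_mod_cast continuousWithinAt_sq_mul_pi_mul_cot_of_int 0 (by simpa using hu 0 hx)
      (by simpa using h0)
  · exact_mod_cast continuousWithinAt_sq_mul_pi_mul_cot_of_int 1 (by simpa using hu 1 hx)
      (by simpa using h1)
  · have hux := (hu x hx).hasDerivAt (Icc_mem_nhds hx'.1 hx'.2)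
    exact (hasDerivAt_sq_mul_pi_mul_cot hx' hux).continuousAt.continuousWithinAt

theorem pi_sq_mul_integral_sq_le_integral_deriv_sq (hu' : ContinuousOn u' (Icc 0 1)) :
    π ^ 2 * ∫ x in (0:ℝ)..1, u x ^ 2 ≤ ∫ x in (0:ℝ)..1, u' x ^ 2 := by
  have hcont : ContinuousOn u (Icc 0 1) := fun x hx => (hu x hx).continuousWithinAt
  have hu'2 : ContinuousOn (fun x => u' x ^ 2) (Icc 0 1) := by fun_prop
  have hu2 : ContinuousOn (fun x => π ^ 2 * u x ^ 2) (Icc 0 1) := by fun_prop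
  have hle := sub_le_integral_of_hasDeriv_right_of_le (φ := fun x => u' x ^ 2 - π ^ 2 * u x ^ 2)
    zero_le_one
    (continuousOn_sq_mul_pi_mul_cot hu h0 h1)
    (fun x hx => (hasDerivAt_sq_mul_pi_mul_cot hx
      ((hu x (Ioo_subset_Icc_self hx)).hasDerivAt (Icc_mem_nhds hx.1 hx.2))).hasDerivWithinAt)
    (hu'2.sub hu2).integrableOn_Icc (fun x hx => deriv_sq_mul_pi_mul_cot_le hx)
  rw [integral_sub (hu'2.intervalIntegrable_of_Icc zero_le_one)
    (hu2.intervalIntegrable_of_Icc zero_le_one), integral_const_mul] at hle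
  simpa [h0, h1] using hle

end Wirtinger

theorem ContDiffOn.hasDerivWithinAt_iteratedDerivWithin {𝕜 F : Type*} [NontriviallyNormedField 𝕜]
    [NormedAddCommGroup F] [NormedSpace 𝕜 F] {f : 𝕜 → F} {s : Set 𝕜} {n : WithTop ℕ∞} {m : ℕ}
    (h : ContDiffOn 𝕜 n f s) (hmn : m < n) (hs : UniqueDiffOn 𝕜 s) {x : 𝕜} (hx : x ∈ s) :
    HasDerivWithinAt (iteratedDerivWithin m f s) (iteratedDerivWithin (m + 1) f s x) s x := by
  rw [iteratedDerivWithin_succ]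
  exact (h.differentiableOn_iteratedDerivWithin hmn hs x hx).hasDerivWithinAt

section IntegrationByParts

variable {u u' u'' : ℝ → ℝ} {a b : ℝ} (hab : a ≤ b)
  (hu : ∀ x ∈ Icc a b, HasDerivWithinAt u (u' x) (Icc a b) x)
  (hu' : ∀ x ∈ Icc a b, HasDerivWithinAt u' (u'' x) (Icc a b) x)
  (hu'' : ContinuousOn u'' (Icc a b)) (ha : u a = 0) (hb : u b = 0)
include hab hu hu' hu'' ha hb

theorem integral_deriv_sq_eq_neg_integral_mul :
    ∫ x in a..b, u' x ^ 2 = -∫ x in a..b, u x * u'' x := by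
  rw [← uIcc_of_le hab] at hu hu' hu''
  have hcont : ContinuousOn u' (uIcc a b) := fun x hx => (hu' x hx).continuousWithinAt
  rw [integral_mul_deriv_eq_deriv_mul_of_hasDerivWithinAt hu hu' hcont.intervalIntegrable
    hu''.intervalIntegrable, ha, hb]
  simp [sq]

theorem integral_deriv_sq_le {t : ℝ} (ht : 0 < t) :
    ∫ x in a..b, u' x ^ 2 ≤ t * (∫ x in a..b, u'' x ^ 2) + (∫ x in a..b, u x ^ 2) / (4 * t) := by
  have hcont : ContinuousOn u (Icc a b) := fun x hx => (hu x hx).continuousWithinAt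
  have hu''2 : ContinuousOn (fun x => t * u'' x ^ 2) (Icc a b) := by fun_prop
  have hu2 : ContinuousOn (fun x => u x ^ 2 / (4 * t)) (Icc a b) := by fun_prop
  have hpointwise : ∀ x ∈ Icc a b, -(u x * u'' x) ≤ t * u'' x ^ 2 + u x ^ 2 / (4 * t) := by
    intro x _
    have hsq : t * u'' x ^ 2 + u x ^ 2 / (4 * t) + u x * u'' x
        = (2 * t * u'' x + u x) ^ 2 / (4 * t) := by
      field_simp
      ring
    have : 0 ≤ (2 * t * u'' x + u x) ^ 2 / (4 * t) := by positivity
    linarith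
  calc ∫ x in a..b, u' x ^ 2 = ∫ x in a..b, -(u x * u'' x) := by
        rw [integral_neg, integral_deriv_sq_eq_neg_integral_mul hab hu hu' hu'' ha hb]
    _ ≤ ∫ x in a..b, (t * u'' x ^ 2 + u x ^ 2 / (4 * t)) :=
        integral_mono_on hab (ContinuousOn.intervalIntegrable_of_Icc hab (by fun_prop))
          ((hu''2.add hu2).intervalIntegrable_of_Icc hab) hpointwise
    _ = t * (∫ x in a..b, u'' x ^ 2) + (∫ x in a..b, u x ^ 2) / (4 * t) := by
        rw [integral_add (hu''2.intervalIntegrable_of_Icc hab) (hu2.intervalIntegrable_of_Icc hab),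
          integral_const_mul, integral_div]

end IntegrationByParts

/-- `P`, `Q`, `R` stand for `∫ u'²`, `∫ u''²`, `∫ u²`. -/
structure IsEnergyTriple (P Q R : ℝ) : Prop where
  nonneg_right : 0 ≤ R
  pi_sq_mul_le : π ^ 2 * R ≤ P
  le_mul_add_div : ∀ t > 0, P ≤ t * Q + R / (4 * t)

namespace IsEnergyTriple

variable {P Q R k β : ℝ} (h : IsEnergyTriple P Q R)
include h

theorem nonneg_left : 0 ≤ P := by
  nlinarith [h.nonneg_right, h.pi_sq_mul_le, pi_pos]

theorem le_div_two_pi_sq_add : P ≤ Q / (2 * π ^ 2) + π ^ 2 * R / 2 := by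
  calc P ≤ 1 / (2 * π ^ 2) * Q + R / (4 * (1 / (2 * π ^ 2))) := h.le_mul_add_div _ (by positivity)
    _ = Q / (2 * π ^ 2) + π ^ 2 * R / 2 := by field_simp; ring

theorem le_div_pi_sq : P ≤ Q / π ^ 2 := by
  have hhalf : Q / (2 * π ^ 2) = Q / π ^ 2 / 2 := by ring
  linarith [h.le_div_two_pi_sq_add, h.pi_sq_mul_le]

theorem mul_le_of_neg (hk : 0 < k) (hβ : β < 0) :
    (1 - β ^ 2 / (4 * k)) * Q ≤ Q + β * P + k * R := by
  have hA := h.le_mul_add_div (-β / (4 * k)) (div_pos (neg_pos.mpr hβ) (by positivity))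
  have hβ' : β ≠ 0 := hβ.ne
  have key : -β * P ≤ β ^ 2 / (4 * k) * Q + k * R := by
    calc -β * P ≤ -β * (-β / (4 * k) * Q + R / (4 * (-β / (4 * k)))) :=
          mul_le_mul_of_nonneg_left hA (by linarith)
      _ = β ^ 2 / (4 * k) * Q + k * R := by field_simp; ring
  linarith

theorem mul_le_of_le_neg (hk : 0 ≤ k) (hβ : 2 * k / π ^ 2 ≤ -β) :
    (1 + β / π ^ 2 + k / π ^ 4) * Q ≤ Q + β * P + k * R := by
  have hA := h.le_div_two_pi_sq_add
  have hP := h.le_div_pi_sq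
  have key : -β * P ≤ (-β / π ^ 2 - k / π ^ 4) * Q + k * R := by
    calc -β * P = 2 * k / π ^ 2 * P + (-β - 2 * k / π ^ 2) * P := by ring
      _ ≤ 2 * k / π ^ 2 * (Q / (2 * π ^ 2) + π ^ 2 * R / 2)
          + (-β - 2 * k / π ^ 2) * (Q / π ^ 2) := by
        gcongr
      _ = (-β / π ^ 2 - k / π ^ 4) * Q + k * R := by field_simp; ring
  linear_combination key

end IsEnergyTriple

theorem bounds_of_neg_betaBar_lt {k β : ℝ} (hk : 0 < k) (hβ : -betaBar k < β) (hβ0 : β < 0)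
    (h4k : 4 * k ≤ β ^ 2) : 2 * k / π ^ 2 ≤ -β ∧ -β < π ^ 2 + k / π ^ 2 := by
  have hkπ : k ≤ π ^ 4 := by
    by_contra! hgt
    rw [betaBar, if_neg hgt.not_ge] at hβ
    nlinarith [sq_sqrt hk.le, sqrt_nonneg k]
  rw [betaBar, if_pos hkπ] at hβ
  refine ⟨?_, by linarith⟩
  have hsq : (2 * k / π ^ 2) ^ 2 ≤ (-β) ^ 2 := by
    rw [div_pow, div_le_iff₀ (by positivity)]
    nlinarith
  exact (pow_le_pow_iff_left₀ (by positivity) (by linarith) two_ne_zero).mp hsq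

theorem exists_pos_mul_le_of_neg_betaBar_lt {k β : ℝ} (hk : 0 < k) (hβ : -betaBar k < β) :
    ∃ ν, 0 < ν ∧ ∀ P Q R : ℝ, IsEnergyTriple P Q R → ν * Q ≤ Q + β * P + k * R := by
  rcases le_or_gt 0 β with hβ0 | hβ0
  · refine ⟨1, one_pos, fun P Q R h => ?_⟩
    nlinarith [h.nonneg_left, h.nonneg_right]
  rcases lt_or_ge (β ^ 2) (4 * k) with h4k | h4k
  · refine ⟨1 - β ^ 2 / (4 * k), ?_, fun P Q R h => h.mul_le_of_neg hk hβ0⟩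
    rw [sub_pos, div_lt_one (by positivity)]
    exact h4k
  · obtain ⟨hlow, hup⟩ := bounds_of_neg_betaBar_lt hk hβ hβ0 h4k
    refine ⟨1 + β / π ^ 2 + k / π ^ 4, ?_, fun P Q R h => h.mul_le_of_le_neg hk.le hlow⟩
    have hπ : 0 < π ^ 2 := by positivity
    have : 0 < π ^ 2 + β + k / π ^ 2 := by linarith
    calc (0:ℝ) < (π ^ 2 + β + k / π ^ 2) / π ^ 2 := by positivity
      _ = 1 + β / π ^ 2 + k / π ^ 4 := by field_simp

theorem isEnergyTriple_of_contDiffOn {u : ℝ → ℝ} (hu : ContDiffOn ℝ 2 u (Icc 0 1)) (h0 : u 0 = 0)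
    (h1 : u 1 = 0) :
    IsEnergyTriple (∫ x in (0:ℝ)..1, iteratedDerivWithin 1 u (Icc 0 1) x ^ 2)
      (∫ x in (0:ℝ)..1, iteratedDerivWithin 2 u (Icc 0 1) x ^ 2) (∫ x in (0:ℝ)..1, u x ^ 2) := by
  have hs : UniqueDiffOn ℝ (Icc (0:ℝ) 1) := uniqueDiffOn_Icc zero_lt_one
  have hu₀ : ∀ x ∈ Icc (0:ℝ) 1,
      HasDerivWithinAt u (iteratedDerivWithin 1 u (Icc 0 1) x) (Icc 0 1) x := by
    simpa using fun x hx => hu.hasDerivWithinAt_iteratedDerivWithin (m := 0) (by norm_num) hs hx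
  have hu₁ : ∀ x ∈ Icc (0:ℝ) 1, HasDerivWithinAt (iteratedDerivWithin 1 u (Icc 0 1))
      (iteratedDerivWithin 2 u (Icc 0 1) x) (Icc 0 1) x :=
    fun x hx => hu.hasDerivWithinAt_iteratedDerivWithin (m := 1) (by norm_num) hs hx
  refine ⟨integral_nonneg zero_le_one fun x _ => sq_nonneg (u x),
    pi_sq_mul_integral_sq_le_integral_deriv_sq hu₀ h0 h1
      (hu.continuousOn_iteratedDerivWithin (by norm_num) hs),
    fun t ht => integral_deriv_sq_le zero_le_one hu₀ hu₁
      (hu.continuousOn_iteratedDerivWithin le_rfl hs) h0 h1 ht⟩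

/-- If `β > -β̄(k)` there is `ν > 0` such that for all `u ∈ C²([0,1])` with
`u(0) = u(1) = 0`:
`∫ u''² + β ∫ u'² + k ∫ u² ≥ ν ∫ u''²`. -/
theorem stmt9 (k β : ℝ) (hk : 0 < k) (hβ : -betaBar k < β) :
    ∃ ν : ℝ, 0 < ν ∧
      ∀ u : ℝ → ℝ, ContDiffOn ℝ 2 u (Icc (0:ℝ) 1) → u 0 = 0 → u 1 = 0 →
        ν * ∫ x in (0:ℝ)..1, (iteratedDerivWithin 2 u (Icc (0:ℝ) 1) x)^2 ≤
          (∫ x in (0:ℝ)..1, (iteratedDerivWithin 2 u (Icc (0:ℝ) 1) x)^2)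
          + β * (∫ x in (0:ℝ)..1, (iteratedDerivWithin 1 u (Icc (0:ℝ) 1) x)^2)
          + k * (∫ x in (0:ℝ)..1, (u x)^2) := by
  obtain ⟨ν, hν, hcoercive⟩ := exists_pos_mul_le_of_neg_betaBar_lt hk hβ
  exact ⟨ν, hν, fun u hu h0 h1 => hcoercive _ _ _ (isEnergyTriple_of_contDiffOn hu h0 h1)⟩
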